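/- arXiv:0806.4156 — 2 statements merged into one kernel-verified Lean document; each statement's English description precedes it below -/
import Mathlib

section
/- Let R be an s-unital ring and a ∈ R. Then the coset a + K(a) is a finite element of the quotient ring R/K(a); that is, there is no nonzero element x̄ of R/K(a) with (a + K(a)) ⊕ x̄ ≼ (a + K(a)) in R/K(a). -/
/-- `x ≼ y` for square matrices over a (possibly nonunital) ring: `x = α * y * β`
for some rectangular matrices `α`, `β`. -/
def MatSub {R : Type*} [NonUnitalRing R] {k n : ℕ}
    (x : Matrix (Fin k) (Fin k) R) (y : Matrix (Fin n) (Fin n) R) : Prop :=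
  ∃ (α : Matrix (Fin k) (Fin n) R) (β : Matrix (Fin n) (Fin k) R), x = α * y * β

/-- `a ⊕ b ≼ c` for ring elements: the block-diagonal matrix `diag(a, b)` satisfies
`diag(a,b) ≼ (c)` as square matrices. -/
def PairSub {R : Type*} [NonUnitalRing R] (a b c : R) : Prop :=
  MatSub !![a, 0; 0, b] !![c]

/-- `a ≼ b` for ring elements: `a = α * b * β` for some ring elements. -/
def ElemSub {R : Type*} [NonUnitalRing R] (a b : R) : Prop :=
  ∃ α β : R, a = α * b * β

/-- `K(a) = { x | a ⊕ x ≼ a }`. -/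
def KSet {R : Type*} [NonUnitalRing R] (a : R) : Set R := { x | PairSub a x a }

/-- An element `a` is infinite if `a ⊕ x ≼ a` for some nonzero `x`, i.e. `K(a) ≠ 0`. -/
def IsInfiniteElem {R : Type*} [NonUnitalRing R] (a : R) : Prop :=
  ∃ x : R, x ≠ 0 ∧ PairSub a x a

/-- An element `a` is properly infinite if `a ≠ 0` and `a ⊕ a ≼ a`. -/
def IsProperlyInfiniteElem {R : Type*} [NonUnitalRing R] (a : R) : Prop :=
  a ≠ 0 ∧ PairSub a a a

/-- A ring is s-unital if each element `x` admits `u, v` with `u * x = x` and `x * v = x`. -/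
def IsSUnitalRing (R : Type*) [NonUnitalRing R] : Prop :=
  ∀ x : R, (∃ u : R, u * x = x) ∧ (∃ v : R, x * v = x)

/-- `b` belongs to `RaR`, the set of finite sums `Σ xᵢ * a * yᵢ`. -/
def MemRaR {R : Type*} [NonUnitalRing R] (a b : R) : Prop :=
  ∃ (n : ℕ) (x y : Fin n → R), b = ∑ i, x i * a * y i

/-- A (possibly nonunital) ring is a division ring: it has a nonzero multiplicative identity
with respect to which every nonzero element is two-sided invertible. -/
def IsDivisionRingPred (R : Type*) [NonUnitalRing R] : Prop :=
  ∃ u : R, u ≠ 0 ∧ (∀ x : R, u * x = x ∧ x * u = x) ∧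
    ∀ x : R, x ≠ 0 → ∃ y : R, x * y = u ∧ y * x = u

/-- A ring `R` is purely infinite if no quotient of `R` by a two-sided ideal is a division
ring, and `b ∈ RaR` implies `b = x * a * y` for some `x, y ∈ R`. -/
def IsPurelyInfiniteRing (R : Type*) [NonUnitalRing R] : Prop :=
  (∀ I : TwoSidedIdeal R, ¬ IsDivisionRingPred I.ringCon.Quotient) ∧
  ∀ a b : R, MemRaR a b → ElemSub b a

/-- A ring is properly purely infinite if every nonzero element is properly infinite. -/
def IsProperlyPurelyInfiniteRing (R : Type*) [NonUnitalRing R] : Prop :=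
  ∀ a : R, a ≠ 0 → IsProperlyInfiniteElem a

/-- An idempotent `e` is infinite if `e ∼ f ≤ e` for some idempotent `f ≠ e`. -/
def IsInfiniteIdem {R : Type*} [NonUnitalRing R] (e : R) : Prop :=
  IsIdempotentElem e ∧ ∃ f : R, IsIdempotentElem f ∧ (∃ x y : R, e = x * y ∧ f = y * x) ∧
    e * f = f ∧ f * e = f ∧ f ≠ e

/-- An exchange ring: for each `x` there are an idempotent `e` and elements `r, s` with
`e = x * r = x + s - x * s`. -/
def IsExchangeRing (R : Type*) [NonUnitalRing R] : Prop :=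
  ∀ x : R, ∃ e r s : R, IsIdempotentElem e ∧ e = x * r ∧ e = x + s - x * s

/-- A ring has local units if every finite subset is contained in a corner `eRe`
for some idempotent `e`. -/
def HasLocalUnits (R : Type*) [NonUnitalRing R] : Prop :=
  ∀ s : Finset R, ∃ e : R, IsIdempotentElem e ∧ ∀ x ∈ s, ∃ r : R, x = e * r * e

lemma pairSub_iff {R : Type*} [NonUnitalRing R] (a b c : R) :
    PairSub a b c ↔ ∃ p q r s : R, p*c*q = a ∧ r*c*s = b ∧ p*c*s = 0 ∧ r*c*q = 0 := by
  constructor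
  · rintro ⟨α, β, h⟩
    have h00 := congrFun (congrFun h.symm 0) 0
    have h01 := congrFun (congrFun h.symm 0) 1
    have h10 := congrFun (congrFun h.symm 1) 0
    have h11 := congrFun (congrFun h.symm 1) 1
    exact ⟨α 0 0, β 0 0, α 1 0, β 0 1,
      by simpa [Matrix.mul_apply, Fin.sum_univ_succ] using h00,
      by simpa [Matrix.mul_apply, Fin.sum_univ_succ] using h11,
      by simpa [Matrix.mul_apply, Fin.sum_univ_succ] using h01,
      by simpa [Matrix.mul_apply, Fin.sum_univ_succ] using h10⟩
  · rintro ⟨p, q, r, s, h1, h2, h3, h4⟩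
    refine ⟨!![p; r], !![q, s], ?_⟩
    ext i j
    fin_cases i <;> fin_cases j <;>
      simp [Matrix.mul_apply, Fin.sum_univ_succ, neg_zero, h1, h2, h3, h4]

lemma pairSub_neg {R : Type*} [NonUnitalRing R] {a b c : R} (h : PairSub a b c) :
    PairSub a (-b) c := by
  rw [pairSub_iff] at h ⊢
  obtain ⟨p, q, r, s, h1, h2, h3, h4⟩ := h
  exact ⟨p, q, -r, s, h1, by rw [neg_mul, neg_mul, h2], h3, by rw [neg_mul, neg_mul, h4, neg_zero]⟩

/-- collapse an inner `g*a*d = a`. -/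
lemma collapse {R : Type*} [NonUnitalRing R] {a g d : R} (h : g*a*d = a) (x y : R) :
    (x*g)*a*(d*y) = x*a*y := by
  have : (x*g)*a*(d*y) = x*(g*a*d)*y := by noncomm_ring
  rw [this, h]

lemma zl {R : Type*} [NonUnitalRing R] {a g y : R} (h : g*a*y = 0) (x : R) :
    (x*g)*a*y = 0 := by
  have : (x*g)*a*y = x*(g*a*y) := by noncomm_ring
  rw [this, h, mul_zero]

lemma zr {R : Type*} [NonUnitalRing R] {a x d : R} (h : x*a*d = 0) (y : R) :
    x*a*(d*y) = 0 := by
  have : x*a*(d*y) = (x*a*d)*y := by noncomm_ring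
  rw [this, h, zero_mul]

/-- Lemma 2.8 (finiteinquotient): if `R` is s-unital and `a ∈ R`, then the coset
`a + K(a)` is finite in `R / K(a)`. -/
theorem coset_finite_in_quotient_by_KSet {R : Type*} [NonUnitalRing R]
    (hR : IsSUnitalRing R) (a : R)
    (I : TwoSidedIdeal R) (hI : ∀ x : R, x ∈ I ↔ x ∈ KSet a) :
    ¬ IsInfiniteElem (a : I.ringCon.Quotient) := by
  rintro ⟨xq, hx0, hsub⟩
  rw [pairSub_iff] at hsub
  obtain ⟨pq, qq, rq, sq, h1, h2, h3, h4⟩ := hsub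
  obtain ⟨x, rfl⟩ : ∃ y : R, (y : I.ringCon.Quotient) = xq := Quotient.exists_rep xq
  obtain ⟨α0, rfl⟩ : ∃ y : R, (y : I.ringCon.Quotient) = pq := Quotient.exists_rep pq
  obtain ⟨β0, rfl⟩ : ∃ y : R, (y : I.ringCon.Quotient) = qq := Quotient.exists_rep qq
  obtain ⟨α1, rfl⟩ : ∃ y : R, (y : I.ringCon.Quotient) = rq := Quotient.exists_rep rq
  obtain ⟨β1, rfl⟩ : ∃ y : R, (y : I.ringCon.Quotient) = sq := Quotient.exists_rep sq
  -- translate the quotient equations into membership in K(a)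
  have mem_of_eq : ∀ u v : R, (u : I.ringCon.Quotient) = (v : I.ringCon.Quotient) →
      PairSub a (u - v) a := by
    intro u v huv
    have : I.ringCon u v := (RingCon.eq _).mp huv
    have : u - v ∈ I := (I.rel_iff u v).mp this
    exact (hI _).mp this
  have hk0 : PairSub a (a - α0*a*β0) a := by
    have := mem_of_eq (α0*a*β0) a h1
    simpa using pairSub_neg this
  have hk1 : PairSub a (x - α1*a*β1) a := by
    have := mem_of_eq (α1*a*β1) x h2
    simpa using pairSub_neg this
  have hc : PairSub a (α0*a*β1) a := by
    have := mem_of_eq (α0*a*β1) 0 (by simpa using h3)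
    simpa using this
  have hd : PairSub a (α1*a*β0) a := by
    have := mem_of_eq (α1*a*β0) 0 (by simpa using h4)
    simpa using this
  rw [pairSub_iff] at hk0 hk1 hc hd
  obtain ⟨g0, d0, hh0, e0, hgd0, hk0e, hge0, hhd0⟩ := hk0
  obtain ⟨g1, d1, hh1, e1, hgd1, hk1e, hge1, hhd1⟩ := hk1
  obtain ⟨g2, d2, hh2, e2, hgd2, hce, hge2, hhd2⟩ := hc
  obtain ⟨g3, d3, hh3, e3, hgd3, hde, hge3, hhd3⟩ := hd
  -- simultaneous orthogonal representations
  set p  : R := g0*g1*g2*g3 with hp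
  set q  : R := d3*(d2*(d1*d0)) with hq
  set r0 : R := hh0*g1*g2*g3 with hr0
  set s0 : R := d3*(d2*(d1*e0)) with hs0
  set r1 : R := hh1*g2*g3 with hr1
  set s1 : R := d3*(d2*e1) with hs1
  set t  : R := hh2*g3 with ht
  set w  : R := d3*e2 with hw
  have Hpq : p*a*q = a := by
    rw [hp, hq, collapse hgd3, collapse hgd2, collapse hgd1, hgd0]
  have Hr0s0 : r0*a*s0 = a - α0*a*β0 := by
    rw [hr0, hs0, collapse hgd3, collapse hgd2, collapse hgd1, hk0e]
  have Hr1s1 : r1*a*s1 = x - α1*a*β1 := by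
    rw [hr1, hs1, collapse hgd3, collapse hgd2, hk1e]
  have Htw : t*a*w = α0*a*β1 := by
    rw [ht, hw, collapse hgd3, hce]
  have Hef : hh3*a*e3 = α1*a*β0 := hde
  have Hps0 : p*a*s0 = 0 := by
    rw [hp, hs0, collapse hgd3, collapse hgd2, collapse hgd1, hge0]
  have Hps1 : p*a*s1 = 0 := by
    rw [hp, hs1, collapse hgd3, collapse hgd2]; exact zl hge1 g0
  have Hpw : p*a*w = 0 := by
    rw [hp, hw, collapse hgd3]; exact zl hge2 (g0*g1)
  have Hpf : p*a*e3 = 0 := by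
    rw [hp]; exact zl hge3 (g0*g1*g2)
  have Hr0q : r0*a*q = 0 := by
    rw [hr0, hq, collapse hgd3, collapse hgd2, collapse hgd1, hhd0]
  have Hr0s1 : r0*a*s1 = 0 := by
    rw [hr0, hs1, collapse hgd3, collapse hgd2]; exact zl hge1 hh0
  have Hr0w : r0*a*w = 0 := by
    rw [hr0, hw, collapse hgd3]; exact zl hge2 (hh0*g1)
  have Hr0f : r0*a*e3 = 0 := by
    rw [hr0]; exact zl hge3 (hh0*g1*g2)
  have Hr1q : r1*a*q = 0 := by
    rw [hr1, hq, collapse hgd3, collapse hgd2]; exact zr hhd1 d0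
  have Hr1s0 : r1*a*s0 = 0 := by
    rw [hr1, hs0, collapse hgd3, collapse hgd2]; exact zr hhd1 e0
  have Hr1w : r1*a*w = 0 := by
    rw [hr1, hw, collapse hgd3]; exact zl hge2 hh1
  have Hr1f : r1*a*e3 = 0 := by
    rw [hr1]; exact zl hge3 (hh1*g2)
  have Htq : t*a*q = 0 := by
    rw [ht, hq, collapse hgd3]; exact zr hhd2 (d1*d0)
  have Hts0 : t*a*s0 = 0 := by
    rw [ht, hs0, collapse hgd3]; exact zr hhd2 (d1*e0)
  have Hts1 : t*a*s1 = 0 := by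
    rw [ht, hs1, collapse hgd3]; exact zr hhd2 e1
  have Htf : t*a*e3 = 0 := by
    rw [ht]; exact zl hge3 hh2
  have Heq : hh3*a*q = 0 := by
    rw [hq]; exact zr hhd3 (d2*(d1*d0))
  have Hes0 : hh3*a*s0 = 0 := by
    rw [hs0]; exact zr hhd3 (d2*(d1*e0))
  have Hes1 : hh3*a*s1 = 0 := by
    rw [hs1]; exact zr hhd3 (d2*e1)
  have Hew : hh3*a*w = 0 := by
    rw [hw]; exact zr hhd3 e2
  -- s-unital units
  obtain ⟨u0, hu0⟩ := (hR (a - α0*a*β0)).1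
  obtain ⟨v0, hv0⟩ := (hR (a - α0*a*β0)).2
  obtain ⟨u1, hu1⟩ := (hR (x - α1*a*β1)).1
  obtain ⟨v1, hv1⟩ := (hR (x - α1*a*β1)).2
  obtain ⟨uc, huc⟩ := (hR (α0*a*β1)).1
  obtain ⟨vc, hvc⟩ := (hR (α0*a*β1)).2
  obtain ⟨ud, hud⟩ := (hR (α1*a*β0)).1
  obtain ⟨vd, hvd⟩ := (hR (α1*a*β0)).2
  -- x ∈ K(a)
  have hxK : PairSub a x a := by
    rw [pairSub_iff]
    refine ⟨α0*p + u0*r0 - uc*t, q*β0 + s0*v0 + e3*vd,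
            α1*p + u1*r1 - ud*hh3, q*β1 + s1*v1 + w*vc, ?_, ?_, ?_, ?_⟩
    · have expand : (α0*p + u0*r0 - uc*t)*a*(q*β0 + s0*v0 + e3*vd) =
        α0*(p*a*q)*β0 + α0*(p*a*s0)*v0 + α0*(p*a*e3)*vd
        + u0*(r0*a*q)*β0 + u0*(r0*a*s0)*v0 + u0*(r0*a*e3)*vd
        - uc*(t*a*q)*β0 - uc*(t*a*s0)*v0 - uc*(t*a*e3)*vd := by noncomm_ring
      rw [expand, Hpq, Hps0, Hpf, Hr0q, Hr0s0, Hr0f, Htq, Hts0, Htf]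
      simp only [mul_zero, zero_mul, add_zero, zero_add, sub_zero]
      rw [hu0, hv0]
      abel
    · have expand : (α1*p + u1*r1 - ud*hh3)*a*(q*β1 + s1*v1 + w*vc) =
        α1*(p*a*q)*β1 + α1*(p*a*s1)*v1 + α1*(p*a*w)*vc
        + u1*(r1*a*q)*β1 + u1*(r1*a*s1)*v1 + u1*(r1*a*w)*vc
        - ud*(hh3*a*q)*β1 - ud*(hh3*a*s1)*v1 - ud*(hh3*a*w)*vc := by noncomm_ring
      rw [expand, Hpq, Hps1, Hpw, Hr1q, Hr1s1, Hr1w, Heq, Hes1, Hew]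
      simp only [mul_zero, zero_mul, add_zero, zero_add, sub_zero]
      rw [hu1, hv1]
      abel
    · have expand : (α0*p + u0*r0 - uc*t)*a*(q*β1 + s1*v1 + w*vc) =
        α0*(p*a*q)*β1 + α0*(p*a*s1)*v1 + α0*(p*a*w)*vc
        + u0*(r0*a*q)*β1 + u0*(r0*a*s1)*v1 + u0*(r0*a*w)*vc
        - uc*(t*a*q)*β1 - uc*(t*a*s1)*v1 - uc*(t*a*w)*vc := by noncomm_ring
      rw [expand, Hpq, Hps1, Hpw, Hr0q, Hr0s1, Hr0w, Htq, Hts1, Htw]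
      simp only [mul_zero, zero_mul, add_zero, zero_add, sub_zero]
      rw [huc, hvc]
      abel
    · have expand : (α1*p + u1*r1 - ud*hh3)*a*(q*β0 + s0*v0 + e3*vd) =
        α1*(p*a*q)*β0 + α1*(p*a*s0)*v0 + α1*(p*a*e3)*vd
        + u1*(r1*a*q)*β0 + u1*(r1*a*s0)*v0 + u1*(r1*a*e3)*vd
        - ud*(hh3*a*q)*β0 - ud*(hh3*a*s0)*v0 - ud*(hh3*a*e3)*vd := by noncomm_ring
      rw [expand, Hpq, Hps0, Hpf, Hr1q, Hr1s0, Hr1f, Heq, Hes0, Hef]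
      simp only [mul_zero, zero_mul, add_zero, zero_add, sub_zero]
      rw [hud, hvd]
      abel
  -- contradiction
  have hmem : x ∈ I := (hI x).mpr hxK
  have : (x : I.ringCon.Quotient) = 0 := by
    have h := (I.rel_iff x 0).mpr (by simpa using hmem)
    exact (RingCon.eq _).mpr h
  exact hx0 this
end

section
/- Let R be an s-unital ring and I an s-unital two-sided ideal of R. Assume that every nonzero two-sided ideal in every quotient of the ring I contains a nonzero idempotent. Then R is properly purely infinite if and only if both I and R/I are properly purely infinite. -/
section Basic

variable {R S : Type*} [NonUnitalRing R] [NonUnitalRing S]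

def IsSUnitalElem (a : R) : Prop :=
  ∃ u v : R, u * a = a ∧ a * v = a

lemma IsSUnitalRing.isSUnitalElem (hR : IsSUnitalRing R) (a : R) : IsSUnitalElem a := by
  obtain ⟨⟨u, hu⟩, ⟨v, hv⟩⟩ := hR a
  exact ⟨u, v, hu, hv⟩

lemma pairSub_iff_s7 {a b c : R} : PairSub a b c ↔ ∃ g₁ g₂ d₁ d₂ : R,
    g₁ * c * d₁ = a ∧ g₁ * c * d₂ = 0 ∧ g₂ * c * d₁ = 0 ∧ g₂ * c * d₂ = b := by
  constructor
  · rintro ⟨α, β, h⟩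
    refine ⟨α 0 0, α 1 0, β 0 0, β 0 1, ?_, ?_, ?_, ?_⟩ <;>
      [have := congrFun₂ h 0 0; have := congrFun₂ h 0 1; have := congrFun₂ h 1 0;
        have := congrFun₂ h 1 1] <;>
      simpa [Matrix.mul_apply] using this.symm
  · rintro ⟨g₁, g₂, d₁, d₂, h₁₁, h₁₂, h₂₁, h₂₂⟩
    refine ⟨!![g₁; g₂], !![d₁, d₂], ?_⟩
    ext i j
    fin_cases i <;> fin_cases j <;> simp [Matrix.mul_apply, h₁₁, h₁₂, h₂₁, h₂₂]

lemma ElemSub.trans {a b c : R} (hab : ElemSub a b) (hbc : ElemSub b c) : ElemSub a c := by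
  obtain ⟨α, β, rfl⟩ := hab
  obtain ⟨γ, δ, rfl⟩ := hbc
  exact ⟨α * γ, δ * β, by noncomm_ring⟩

section Map

variable {F : Type*} [FunLike F R S] [NonUnitalRingHomClass F R S] (f : F)

lemma IsSUnitalElem.map {a : R} (ha : IsSUnitalElem a) : IsSUnitalElem (f a) := by
  obtain ⟨u, v, hu, hv⟩ := ha
  exact ⟨f u, f v, by rw [← map_mul, hu], by rw [← map_mul, hv]⟩

lemma ElemSub.map {a b : R} (h : ElemSub a b) : ElemSub (f a) (f b) := by
  obtain ⟨α, β, rfl⟩ := h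
  exact ⟨f α, f β, by simp only [map_mul]⟩

lemma PairSub.map {a b c : R} (h : PairSub a b c) : PairSub (f a) (f b) (f c) := by
  obtain ⟨g₁, g₂, d₁, d₂, h₁₁, h₁₂, h₂₁, h₂₂⟩ := pairSub_iff_s7.1 h
  refine pairSub_iff_s7.2 ⟨f g₁, f g₂, f d₁, f d₂, ?_, ?_, ?_, ?_⟩ <;>
    simp only [← map_mul, h₁₁, h₁₂, h₂₁, h₂₂, map_zero]

lemma MatSub.exists_lift (hf : Function.Surjective f) {k n : ℕ}
    {T : Matrix (Fin k) (Fin k) R} {Y : Matrix (Fin n) (Fin n) R}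
    (h : MatSub (T.map f) (Y.map f)) :
    ∃ (α : Matrix (Fin k) (Fin n) R) (β : Matrix (Fin n) (Fin k) R),
      (α * Y * β).map f = T.map f := by
  obtain ⟨α, β, h⟩ := h
  refine ⟨α.map (Function.surjInv hf), β.map (Function.surjInv hf), ?_⟩
  simp only [Matrix.map_mul, Matrix.map_map, Function.comp_def, Function.surjInv_eq hf,
    Matrix.map_id', h]

end Map

end Basic

section KSet

variable {R : Type*} [NonUnitalRing R] {a : R}

lemma exists_orthogonal_system_fin (ha : IsSUnitalElem a) :
    ∀ (n : ℕ) (x : Fin n → R), (∀ i, x i ∈ KSet a) → ∃ (γ δ : R) (G D : Fin n → R),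
      γ * a * δ = a ∧ (∀ i, γ * a * D i = 0) ∧ (∀ i, G i * a * δ = 0) ∧
      ∀ i j, G i * a * D j = if i = j then x i else 0
  | 0, _, _ => by
    obtain ⟨u, v, hu, hv⟩ := ha
    exact ⟨u, v, Fin.elim0, Fin.elim0, by rw [hu, hv], (·.elim0), (·.elim0), (·.elim0)⟩
  | n + 1, x, hx => by
    obtain ⟨γ, δ, G, D, hγδ, hγD, hGδ, hGD⟩ :=
      exists_orthogonal_system_fin ha n (Fin.tail x) (fun i => hx i.succ)
    obtain ⟨p, H, q, E, hpq, hpE, hHq, hHE⟩ := pairSub_iff_s7.1 (hx 0)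
    have left (r : R) (i : Fin n) : r * γ * a * D i = 0 := by
      rw [mul_assoc r, mul_assoc r, hγD, mul_zero]
    have right (r : R) (i : Fin n) : G i * a * (δ * r) = 0 := by
      rw [← mul_assoc, hGδ, zero_mul]
    have sandwich (r s : R) : r * γ * a * (δ * s) = r * a * s := by
      calc r * γ * a * (δ * s) = r * (γ * a * δ) * s := by noncomm_ring
        _ = r * a * s := by rw [hγδ]
    refine ⟨p * γ, δ * q, Fin.cons (H * γ) G, Fin.cons (δ * E) D, ?_, ?_, ?_, ?_⟩
    · rw [sandwich, hpq]
    · refine Fin.cases ?_ (fun i => ?_) <;> simp only [Fin.cons_zero, Fin.cons_succ]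
      exacts [by rw [sandwich, hpE], left p i]
    · refine Fin.cases ?_ (fun i => ?_) <;> simp only [Fin.cons_zero, Fin.cons_succ]
      exacts [by rw [sandwich, hHq], right q i]
    · refine Fin.cases (Fin.cases ?_ fun j => ?_) (fun i => Fin.cases ?_ fun j => ?_) <;>
        simp only [Fin.cons_zero, Fin.cons_succ, Fin.succ_inj, Fin.succ_ne_zero,
          (Fin.succ_ne_zero _).symm, if_true, if_false]
      exacts [by rw [sandwich, hHE], left H j, right E i, hGD i j]

lemma exists_orthogonal_system (ha : IsSUnitalElem a) {ι : Type*} [Fintype ι] [DecidableEq ι]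
    (x : ι → R) (hx : ∀ i, x i ∈ KSet a) : ∃ (γ δ : R) (G D : ι → R),
      γ * a * δ = a ∧ (∀ i, γ * a * D i = 0) ∧ (∀ i, G i * a * δ = 0) ∧
      ∀ i j, G i * a * D j = if i = j then x i else 0 := by
  let e := Fintype.equivFin ι
  obtain ⟨γ, δ, G, D, hγδ, hγD, hGδ, hGD⟩ :=
    exists_orthogonal_system_fin ha _ (x ∘ e.symm) (fun i => hx _)
  refine ⟨γ, δ, G ∘ e, D ∘ e, hγδ, fun i => hγD _, fun i => hGδ _, fun i j => ?_⟩
  simp [hGD, e.injective.eq_iff]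

lemma zero_mem_kSet (ha : IsSUnitalElem a) : (0 : R) ∈ KSet a := by
  obtain ⟨u, v, hu, hv⟩ := ha
  exact pairSub_iff_s7.2 ⟨u, 0, v, 0, by rw [hu, hv], by simp, by simp, by simp⟩

lemma add_mem_kSet (ha : IsSUnitalElem a) {x y : R} (hx : x ∈ KSet a) (hy : y ∈ KSet a) :
    x + y ∈ KSet a := by
  obtain ⟨γ, δ, G, D, hγδ, hγD, hGδ, hGD⟩ :=
    exists_orthogonal_system ha ![x, y] (Fin.forall_fin_two.2 ⟨hx, hy⟩)
  refine pairSub_iff_s7.2 ⟨γ, G 0 + G 1, δ, D 0 + D 1, hγδ, ?_, ?_, ?_⟩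
  · rw [mul_add, hγD, hγD, add_zero]
  · rw [add_mul, add_mul, hGδ, hGδ, add_zero]
  · simp only [mul_add, add_mul, hGD]
    simp

lemma neg_mem_kSet {x : R} (hx : x ∈ KSet a) : -x ∈ KSet a := by
  obtain ⟨γ, G, δ, D, hγδ, hγD, hGδ, hGD⟩ := pairSub_iff_s7.1 hx
  exact pairSub_iff_s7.2 ⟨γ, -G, δ, D, hγδ, hγD, by simp [hGδ], by simp [hGD]⟩

lemma mul_mem_kSet_left (r : R) {x : R} (hx : x ∈ KSet a) : r * x ∈ KSet a := by
  obtain ⟨γ, G, δ, D, hγδ, hγD, hGδ, hGD⟩ := pairSub_iff_s7.1 hx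
  refine pairSub_iff_s7.2 ⟨γ, r * G, δ, D, hγδ, hγD, ?_, ?_⟩ <;>
    simp only [mul_assoc r, hGδ, hGD, mul_zero]

lemma mul_mem_kSet_right (r : R) {x : R} (hx : x ∈ KSet a) : x * r ∈ KSet a := by
  obtain ⟨γ, G, δ, D, hγδ, hγD, hGδ, hGD⟩ := pairSub_iff_s7.1 hx
  refine pairSub_iff_s7.2 ⟨γ, G, δ, D * r, hγδ, ?_, hGδ, ?_⟩ <;>
    simp only [← mul_assoc, hγD, hGD, zero_mul]

def kIdeal (a : R) (ha : IsSUnitalElem a) : TwoSidedIdeal R :=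
  .mk' (KSet a) (zero_mem_kSet ha) (add_mem_kSet ha) neg_mem_kSet (mul_mem_kSet_left _)
    (mul_mem_kSet_right _)

lemma mem_kIdeal {ha : IsSUnitalElem a} {x : R} : x ∈ kIdeal a ha ↔ x ∈ KSet a :=
  TwoSidedIdeal.mem_mk' ..

end KSet

section Absorb

variable {R : Type*} [NonUnitalRing R] {a : R}

lemma matSub_of_sub_mem_kSet (ha : IsSUnitalElem a) {k : ℕ} (T : Matrix (Fin k) (Fin k) R)
    (α : Matrix (Fin k) (Fin 1) R) (β : Matrix (Fin 1) (Fin k) R)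
    (h : ∀ p q, T p q - (α * !![a] * β) p q ∈ KSet a) : MatSub T !![a] := by
  have entry (L : Matrix (Fin k) (Fin 1) R) (M : Matrix (Fin 1) (Fin k) R) (p q) :
      (L * !![a] * M) p q = L p 0 * a * M 0 q := by
    simp [Matrix.mul_apply]
  obtain ⟨γ, δ, G, D, hγδ, hγD, hGδ, hGD⟩ :=
    exists_orthogonal_system ha (fun pq : Fin k × Fin k => T pq.1 pq.2 - α pq.1 0 * a * β 0 pq.2)
      (fun pq => entry α β pq.1 pq.2 ▸ h pq.1 pq.2)
  refine ⟨Matrix.of fun p _ => α p 0 * γ + ∑ q, G (p, q),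
    Matrix.of fun _ q => δ * β 0 q + ∑ p, D (p, q), ?_⟩
  ext p q
  have expand : (α p 0 * γ + ∑ q', G (p, q')) * a * (δ * β 0 q + ∑ p', D (p', q)) =
      α p 0 * (γ * a * δ) * β 0 q + ∑ p', α p 0 * (γ * a * D (p', q)) +
        ∑ q', G (p, q') * a * δ * β 0 q + ∑ p', ∑ q', G (p, q') * a * D (p', q) := by
    simp only [add_mul, mul_add, Finset.sum_mul, Finset.mul_sum, mul_assoc,
      Finset.sum_add_distrib]
    abel
  have diag : ∑ p', ∑ q', G (p, q') * a * D (p', q) = T p q - α p 0 * a * β 0 q := by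
    simp [hGD, Prod.ext_iff, ite_and]
  rw [entry, Matrix.of_apply, Matrix.of_apply, expand, diag, hγδ]
  simp [hγD, hGδ]

end Absorb

section Quotient

variable {R : Type*} [NonUnitalRing R] (J : TwoSidedIdeal R)

def TwoSidedIdeal.quotientMk : R →ₙ+* J.ringCon.Quotient where
  toFun x := x
  map_mul' _ _ := rfl
  map_zero' := rfl
  map_add' _ _ := rfl

variable {J}

lemma TwoSidedIdeal.quotientMk_surjective : Function.Surjective J.quotientMk :=
  Quotient.mk''_surjective

lemma TwoSidedIdeal.quotientMk_eq_iff {x y : R} : J.quotientMk x = J.quotientMk y ↔ x - y ∈ J :=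
  (RingCon.eq _).trans (J.rel_iff x y)

lemma TwoSidedIdeal.quotientMk_eq_zero {x : R} : J.quotientMk x = 0 ↔ x ∈ J := by
  simpa using quotientMk_eq_iff (J := J) (x := x) (y := 0)

lemma PairSub.exists_sub_mem_of_quotient {a b c : R}
    (h : PairSub (J.quotientMk a) (J.quotientMk b) (J.quotientMk c)) :
    ∃ (α : Matrix (Fin 2) (Fin 1) R) (β : Matrix (Fin 1) (Fin 2) R),
      ∀ p q, !![a, 0; 0, b] p q - (α * !![c] * β) p q ∈ J := by
  have hT : !![a, 0; 0, b].map J.quotientMk = !![J.quotientMk a, 0; 0, J.quotientMk b] := by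
    ext i j; fin_cases i <;> fin_cases j <;> simp
  have hY : !![c].map J.quotientMk = !![J.quotientMk c] := by
    ext i j; fin_cases i; fin_cases j; simp
  obtain ⟨α, β, hαβ⟩ := MatSub.exists_lift J.quotientMk TwoSidedIdeal.quotientMk_surjective
    (T := !![a, 0; 0, b]) (Y := !![c]) (by rw [hT, hY]; exact h)
  refine ⟨α, β, fun p q => TwoSidedIdeal.quotientMk_eq_iff.1 ?_⟩
  exact (congrFun₂ hαβ p q).symm

end Quotient

section Idempotent

variable {R : Type*} [NonUnitalRing R]

lemma IsIdempotentElem.pairSub_of_elemSub {a e : R} (he : IsIdempotentElem e)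
    (ha : IsSUnitalElem a) (hea : ElemSub e a) (hee : PairSub e e e) : PairSub a e a := by
  obtain ⟨u, v, hu, hv⟩ := ha
  obtain ⟨P, Q, hPQ⟩ := hea
  obtain ⟨f₀, f₁, g₀, g₁, h₀₀, h₀₁, h₁₀, h₁₁⟩ := pairSub_iff_s7.1 hee
  set r := e * P
  set s := Q * e
  have hras (x : R) : r * (a * (s * x)) = e * x :=
    calc r * (a * (s * x)) = e * (P * a * Q) * e * x := by simp only [r, s, mul_assoc]
      _ = e * x := by rw [← hPQ, he.eq, he.eq]
  have her (x : R) : e * (r * x) = r * x := by simp only [r, ← mul_assoc, he.eq]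
  have hse (x : R) : s * (e * x) = s * x := by simp only [s, ← mul_assoc]; rw [mul_assoc Q, he.eq]
  have h₀₀' (x : R) : f₀ * (e * (g₀ * x)) = e * x := by simp only [← mul_assoc, h₀₀]
  have h₁₀' (x : R) : f₁ * (e * (g₀ * x)) = 0 := by simp only [← mul_assoc, h₁₀, zero_mul]
  simp only [mul_assoc] at h₀₁ h₁₁
  -- `a = (a - a s r a) + a s r a`, and `a s r a` is matched with the first copy of `e` in
  -- `e ⊕ e ≼ e`; the second copy provides the summand `e`.
  refine pairSub_iff_s7.2 ⟨u - a * s * r + a * s * f₀ * r, f₁ * r,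
    v - s * r * a + s * g₀ * r * a, s * g₁, ?_, ?_, ?_, ?_⟩ <;>
  simp only [mul_sub, sub_mul, mul_add, add_mul, mul_assoc, hu, hv, hras, her, hse, h₀₀',
    h₀₁, h₁₀', h₁₁, mul_zero] <;>
  abel

lemma mem_kSet_of_mul_self_sub_mem {a x : R} (ha : IsSUnitalElem a) (hxa : ElemSub x a)
    (hxx : PairSub x x x) (hx : x * x - x ∈ KSet a) : x ∈ KSet a := by
  let π := (kIdeal a ha).quotientMk
  have hπx : IsIdempotentElem (π x) := by
    rw [IsIdempotentElem, ← map_mul, TwoSidedIdeal.quotientMk_eq_iff]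
    exact mem_kIdeal.2 hx
  obtain ⟨α, β, h⟩ := PairSub.exists_sub_mem_of_quotient
    (hπx.pairSub_of_elemSub (ha.map π) (hxa.map π) (hxx.map π))
  exact matSub_of_sub_mem_kSet ha _ α β fun p q => mem_kIdeal.1 (h p q)

end Idempotent

section MemRaR

variable {R : Type*} [NonUnitalRing R]

lemma elemSub_of_memRaR {m z : R} (hm : IsSUnitalElem m) (hmm : PairSub m m m)
    (hz : MemRaR m z) : ElemSub z m := by
  obtain ⟨n, A, B, rfl⟩ := hz
  obtain ⟨-, -, G, D, -, -, -, hGD⟩ := exists_orthogonal_system hm (fun _ : Fin n => m)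
    fun _ => hmm
  refine ⟨∑ i, A i * G i, ∑ j, D j * B j, ?_⟩
  calc ∑ i, A i * m * B i = ∑ i, ∑ j, A i * (G i * m * D j) * B j := by simp [hGD]
    _ = _ := by rw [Finset.sum_comm]; simp only [Finset.sum_mul, Finset.mul_sum, mul_assoc]

lemma memRaR_add {a b c : R} (hb : MemRaR a b) (hc : MemRaR a c) : MemRaR a (b + c) := by
  obtain ⟨n, x, y, rfl⟩ := hb
  obtain ⟨k, x', y', rfl⟩ := hc
  exact ⟨n + k, Fin.append x x', Fin.append y y', by simp [Fin.sum_univ_add]⟩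

lemma memRaR_of_mem_span {a b : R} (ha : IsSUnitalElem a)
    (hb : b ∈ TwoSidedIdeal.span {a}) : MemRaR a b := by
  induction hb using TwoSidedIdeal.span_induction with
  | mem x hx =>
    obtain ⟨u, v, hu, hv⟩ := ha
    exact ⟨1, ![u], ![v], by simp [Set.mem_singleton_iff.1 hx, hu, hv]⟩
  | zero => exact ⟨0, Fin.elim0, Fin.elim0, by simp⟩
  | add x y _ _ hx hy => exact memRaR_add hx hy
  | neg x _ hx =>
    obtain ⟨n, p, q, rfl⟩ := hx
    exact ⟨n, -p, q, by simp⟩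
  | left_absorb r x _ hx =>
    obtain ⟨n, p, q, rfl⟩ := hx
    exact ⟨n, fun i => r * p i, q, by simp [Finset.mul_sum, mul_assoc]⟩
  | right_absorb r x _ hx =>
    obtain ⟨n, p, q, rfl⟩ := hx
    exact ⟨n, p, fun i => q i * r, by simp [Finset.sum_mul, mul_assoc]⟩

end MemRaR

section Span

variable {R S F : Type*} [NonUnitalRing R] [NonUnitalRing S] [FunLike F R S]
  [NonUnitalRingHomClass F R S] {f : F} {s : Set R}

lemma TwoSidedIdeal.map_mem_span_image {x : R} (hx : x ∈ span s) : f x ∈ span (f '' s) := by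
  have : span s ≤ (span (f '' s)).comap f :=
    span_le.2 fun y hy => (mem_comap f).2 (subset_span ⟨y, hy, rfl⟩)
  exact (mem_comap f).1 (this hx)

lemma TwoSidedIdeal.exists_mem_span_of_mem_span_image (hf : Function.Surjective f) {y : S}
    (hy : y ∈ span (f '' s)) : ∃ x ∈ span s, f x = y := by
  induction hy using span_induction with
  | mem y hy =>
    obtain ⟨x, hx, rfl⟩ := hy
    exact ⟨x, subset_span hx, rfl⟩
  | zero => exact ⟨0, zero_mem _, map_zero f⟩
  | add _ _ _ _ h₁ h₂ =>
    obtain ⟨⟨x₁, hx₁, rfl⟩, ⟨x₂, hx₂, rfl⟩⟩ := And.intro h₁ h₂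
    exact ⟨x₁ + x₂, add_mem _ hx₁ hx₂, map_add f _ _⟩
  | neg _ _ h =>
    obtain ⟨x, hx, rfl⟩ := h
    exact ⟨-x, neg_mem _ hx, map_neg f _⟩
  | left_absorb r _ _ h =>
    obtain ⟨x, hx, rfl⟩ := h
    obtain ⟨r, rfl⟩ := hf r
    exact ⟨r * x, mul_mem_left _ _ _ hx, map_mul f _ _⟩
  | right_absorb r _ _ h =>
    obtain ⟨x, hx, rfl⟩ := h
    obtain ⟨r, rfl⟩ := hf r
    exact ⟨x * r, mul_mem_right _ _ _ hx, map_mul f _ _⟩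

end Span

section Extension

variable {R S : Type*} [NonUnitalRing R] [NonUnitalRing S]

lemma IsProperlyPurelyInfiniteRing.of_surjective {F : Type*} [FunLike F R S]
    [NonUnitalRingHomClass F R S] (f : F) (hf : Function.Surjective f)
    (h : IsProperlyPurelyInfiniteRing R) : IsProperlyPurelyInfiniteRing S := by
  intro y hy
  obtain ⟨x, rfl⟩ := hf y
  exact ⟨hy, (h x (by rintro rfl; exact hy (map_zero f))).2.map f⟩

lemma IsProperlyPurelyInfiniteRing.twoSidedIdeal (h : IsProperlyPurelyInfiniteRing R)
    {I : TwoSidedIdeal R} (hI : IsSUnitalRing I) : IsProperlyPurelyInfiniteRing I := by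
  intro a ha
  obtain ⟨g₁, g₂, d₁, d₂, h₁₁, h₁₂, h₂₁, h₂₂⟩ :=
    pairSub_iff_s7.1 (h a fun h0 => ha (Subtype.ext h0)).2
  obtain ⟨u, v, hu, hv⟩ := hI.isSUnitalElem a
  have huv : (u : R) * a * v = a := by
    rw [show (u : R) * a = a from congrArg Subtype.val hu, show (a : R) * v = a from
      congrArg Subtype.val hv]
  let left (g : R) : I := ⟨u * g, I.mul_mem_right _ _ u.2⟩
  let right (d : R) : I := ⟨d * v, I.mul_mem_left _ _ v.2⟩
  have hcoe (g d : R) : ((left g * a * right d : I) : R) = u * (g * a * d) * v := by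
    show (u : R) * g * a * (d * v) = _
    noncomm_ring
  refine ⟨ha, pairSub_iff_s7.2 ⟨left g₁, left g₂, right d₁, right d₂, ?_, ?_, ?_, ?_⟩⟩ <;>
    ext <;> simp only [hcoe, h₁₁, h₁₂, h₂₁, h₂₂, huv, mul_zero, zero_mul] <;> rfl

def HasIdempotentsInQuotientIdeals (A : Type*) [NonUnitalRing A] : Prop :=
  ∀ (c : TwoSidedIdeal A) (D : TwoSidedIdeal c.ringCon.Quotient),
    (∃ x ∈ D, x ≠ 0) → ∃ x ∈ D, x ≠ 0 ∧ IsIdempotentElem x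

variable {I : TwoSidedIdeal R}

lemma mem_kSet_of_mem_of_elemSub (hR : IsSUnitalRing R)
    (hidem : HasIdempotentsInQuotientIdeals I) (hIppi : IsProperlyPurelyInfiniteRing I)
    {a m : R} (hmI : m ∈ I) (hma : ElemSub m a) :
    m ∈ KSet a := by
  let ι := NonUnitalSubringClass.subtype I
  let K : TwoSidedIdeal I := (kIdeal a (hR.isSUnitalElem a)).comap ι
  have memK (z : I) : z ∈ K ↔ (z : R) ∈ KSet a := (TwoSidedIdeal.mem_comap ι).trans mem_kIdeal
  let π := K.quotientMk
  have ppi (z : I) (hz : π z ≠ 0) : PairSub (z : R) z z :=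
    (hIppi z (by rintro rfl; exact hz (map_zero π))).2.map ι
  let m' : I := ⟨m, hmI⟩
  by_contra hmK
  have hm' : π m' ≠ 0 := fun h => hmK ((memK m').1 (TwoSidedIdeal.quotientMk_eq_zero.1 h))
  obtain ⟨q, hq, hq0, hqq⟩ :=
    hidem K (TwoSidedIdeal.span {π m'}) ⟨π m', TwoSidedIdeal.subset_span rfl, hm'⟩
  obtain ⟨z, hz, rfl⟩ := TwoSidedIdeal.exists_mem_span_of_mem_span_image
    TwoSidedIdeal.quotientMk_surjective (s := {m'}) (by rwa [Set.image_singleton])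
  have hzm : ElemSub (z : R) m := elemSub_of_memRaR (hR.isSUnitalElem m) (ppi m' hm')
    (memRaR_of_mem_span (hR.isSUnitalElem m)
      (by simpa [ι] using TwoSidedIdeal.map_mem_span_image (f := ι) hz))
  have hzz : z * z - z ∈ K := by
    rw [← TwoSidedIdeal.quotientMk_eq_iff, map_mul]
    exact hqq.eq
  refine hq0 (TwoSidedIdeal.quotientMk_eq_zero.2 ((memK z).2 ?_))
  exact mem_kSet_of_mul_self_sub_mem (hR.isSUnitalElem a) (hzm.trans hma) (ppi z hq0)
    ((memK _).1 hzz)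

lemma mem_kSet_of_mem_of_mem_span (hR : IsSUnitalRing R) (hI : IsSUnitalRing I)
    (hidem : HasIdempotentsInQuotientIdeals I) (hIppi : IsProperlyPurelyInfiniteRing I)
    {a w : R} (hwI : w ∈ I) (hw : w ∈ TwoSidedIdeal.span {a}) : w ∈ KSet a := by
  obtain ⟨n, x, y, hxy⟩ := memRaR_of_mem_span (hR.isSUnitalElem a) hw
  obtain ⟨u, v, hu, hv⟩ := hI.isSUnitalElem ⟨w, hwI⟩
  have hw' : w = ∑ i, ((u : R) * x i) * a * (y i * v) := by
    calc w = u * w * v := by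
          rw [show (u : R) * w = w from congrArg Subtype.val hu,
            show w * (v : R) = w from congrArg Subtype.val hv]
      _ = _ := by simp only [hxy, Finset.mul_sum, Finset.sum_mul, mul_assoc]
  rw [hw']
  refine (mem_kIdeal (ha := hR.isSUnitalElem a)).1 (sum_mem fun i _ => mem_kIdeal.2 ?_)
  exact mem_kSet_of_mem_of_elemSub hR hidem hIppi
    (I.mul_mem_right _ _ (I.mul_mem_right _ _ (I.mul_mem_right _ _ u.2))) ⟨_, _, rfl⟩

lemma pairSub_self_of_pairSub_quotient (hR : IsSUnitalRing R) (hI : IsSUnitalRing I)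
    (hidem : HasIdempotentsInQuotientIdeals I) (hIppi : IsProperlyPurelyInfiniteRing I) {a : R}
    (h : PairSub (I.quotientMk a) (I.quotientMk a) (I.quotientMk a)) : PairSub a a a := by
  obtain ⟨α, β, hαβ⟩ := h.exists_sub_mem_of_quotient
  have ha : a ∈ TwoSidedIdeal.span {a} := TwoSidedIdeal.subset_span rfl
  refine matSub_of_sub_mem_kSet (hR.isSUnitalElem a) _ α β fun p q =>
    mem_kSet_of_mem_of_mem_span hR hI hidem hIppi (hαβ p q) (sub_mem ?_ ?_)
  · fin_cases p <;> fin_cases q <;> simp [ha, zero_mem]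
  · simpa [Matrix.mul_apply] using
      TwoSidedIdeal.mul_mem_right _ _ _ (TwoSidedIdeal.mul_mem_left _ (α p 0) _ ha)

end Extension

/-- Proposition 3.10 (spiextn): let `R` be an s-unital ring and `I` an s-unital two-sided
ideal of `R` such that every nonzero two-sided ideal in every quotient of the ring `I`
contains a nonzero idempotent. Then `R` is properly purely infinite if and only if both `I`
and `R/I` are properly purely infinite. -/
theorem properlyPurelyInfinite_extension {R : Type*} [NonUnitalRing R]
    (hR : IsSUnitalRing R) (I : TwoSidedIdeal R) (hI : IsSUnitalRing I)
    (hidem : ∀ (c : TwoSidedIdeal ↥I) (D : TwoSidedIdeal c.ringCon.Quotient),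
        (∃ x ∈ D, x ≠ 0) → ∃ x ∈ D, x ≠ 0 ∧ IsIdempotentElem x) :
    IsProperlyPurelyInfiniteRing R ↔
      (IsProperlyPurelyInfiniteRing I ∧ IsProperlyPurelyInfiniteRing I.ringCon.Quotient) := by
  refine ⟨fun h => ⟨h.twoSidedIdeal hI,
    h.of_surjective I.quotientMk TwoSidedIdeal.quotientMk_surjective⟩, ?_⟩
  rintro ⟨hIppi, hQppi⟩ a ha
  refine ⟨ha, ?_⟩
  by_cases haI : a ∈ I
  · exact (hIppi ⟨a, haI⟩ fun h => ha (congrArg Subtype.val h)).2.map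
      (NonUnitalSubringClass.subtype I)
  · have haQ : I.quotientMk a ≠ 0 := fun h => haI (TwoSidedIdeal.quotientMk_eq_zero.1 h)
    exact pairSub_self_of_pairSub_quotient hR hI hidem hIppi (hQppi _ haQ).2
end
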